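/- Let h ≥ 1, n = 2h, and let α, β be disjoint finsets of V with α.card = β.card = h + 1. Then F(Λ_α) \ D_α = F(Λ_β) \ D_β, this common set has cardinality (h + 1)², and F(Λ_α) has cardinality (h + 1)² + ((h + 1) choose 2); the same count holds for F(Λ_β). -/
import Mathlib


open Finset

variable {V : Type*} [DecidableEq V]

/-- An abstract simplicial complex: a set of finsets closed under taking subsets. -/
def IsSimplicialComplex (K : Set (Finset V)) : Prop :=
  ∀ S ∈ K, ∀ T ⊆ S, T ∈ K

/-- The boundary complex `∂s` of a finset `s`: all proper subsets of `s`. -/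
def bdry (s : Finset V) : Set (Finset V) := {T | T ⊂ s}

/-- The join `α * ∂β = {γ ∪ δ : γ ⊆ α, δ ⊊ β}` (this is `Λ_α`). -/
def joinSB (α β : Finset V) : Set (Finset V) :=
  {S | ∃ γ δ : Finset V, γ ⊆ α ∧ δ ⊂ β ∧ S = γ ∪ δ}

/-- The join `∂α * β = {γ ∪ δ : γ ⊊ α, δ ⊆ β}` (this is `Λ_β`). -/
def joinBS (α β : Finset V) : Set (Finset V) :=
  {S | ∃ γ δ : Finset V, γ ⊂ α ∧ δ ⊆ β ∧ S = γ ∪ δ}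

/-- The link of a face `α` in `K`. -/
def linkOf (K : Set (Finset V)) (α : Finset V) : Set (Finset V) :=
  {γ | γ ∩ α = ∅ ∧ γ ∪ α ∈ K}

/-- `(α, β)` is a bistellar pair of type `h` in `K`, viewed as `n`-dimensional. -/
def IsBistellarPair (K : Set (Finset V)) (n h : ℕ) (α β : Finset V) : Prop :=
  α ∈ K ∧ α.card = n - h + 1 ∧ β.card = h + 1 ∧ α ∩ β = ∅ ∧ β ∉ K ∧
    linkOf K α = bdry β

/-- The bistellar move `bm_α K = (K \ (α * ∂β)) ∪ (∂α * β)`. -/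
def bm (K : Set (Finset V)) (α β : Finset V) : Set (Finset V) :=
  (K \ joinSB α β) ∪ joinBS α β

/-- The `i`-th entry of the f-vector: the number of `i`-dimensional faces of `K`. -/
noncomputable def fvec (K : Set (Finset V)) (i : ℕ) : ℕ := {S ∈ K | S.card = i + 1}.ncard

/-- The set of `(n-1)`-dimensional faces of a complex `Λ` (members with `n` elements). -/
def faceSet (Λ : Set (Finset V)) (n : ℕ) : Set (Finset V) := {S ∈ Λ | S.card = n}


lemma mem_joinSB_iff {α β : Finset V} (hd : Disjoint α β) {S : Finset V} :
    S ∈ joinSB α β ↔ S ⊆ α ∪ β ∧ ¬ β ⊆ S := by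
  constructor
  · rintro ⟨γ, δ, hγ, hδ, rfl⟩
    refine ⟨union_subset_union hγ hδ.subset, fun hb => ?_⟩
    have hbd : β ⊆ δ := fun x hx => by
      rcases mem_union.mp (hb hx) with h1 | h1
      · exact absurd hx (disjoint_left.mp hd (hγ h1))
      · exact h1
    exact (hδ.not_subset) hbd
  · rintro ⟨hsub, hnb⟩
    refine ⟨S ∩ α, S ∩ β, inter_subset_right, ?_, ?_⟩
    · exact Finset.ssubset_iff_subset_ne.mpr ⟨inter_subset_right,
        fun he => hnb (by rw [← he]; exact inter_subset_left)⟩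
    · rw [← inter_union_distrib_left, inter_eq_left.mpr hsub]

lemma joinBS_eq_joinSB (α β : Finset V) : joinBS α β = joinSB β α := by
  ext S
  constructor
  · rintro ⟨γ, δ, h1, h2, rfl⟩
    exact ⟨δ, γ, h2, h1, union_comm _ _⟩
  · rintro ⟨γ, δ, h1, h2, rfl⟩
    exact ⟨δ, γ, h2, h1, union_comm _ _⟩

lemma faceSB_eq (α β : Finset V) (hd : Disjoint α β) (n : ℕ) :
    faceSet (joinSB α β) n
      = ↑(((α ∪ β).powersetCard n).filter (fun S => ¬ β ⊆ S)) := by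
  ext S
  simp only [faceSet, Set.mem_setOf_eq, coe_filter, mem_powersetCard,
    mem_joinSB_iff hd]
  tauto

lemma card_filter_superset {α β : Finset V} (hd : Disjoint α β) {n : ℕ}
    (hn : β.card ≤ n) :
    (((α ∪ β).powersetCard n).filter (fun S => β ⊆ S)).card
      = α.card.choose (n - β.card) := by
  rw [← Finset.card_powersetCard]
  apply Finset.card_bij' (fun S _ => S \ β) (fun δ _ => δ ∪ β)
  · intro S hS
    simp only [mem_filter, mem_powersetCard] at hS
    obtain ⟨⟨hsub, hcard⟩, hβS⟩ := hS
    rw [mem_powersetCard]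
    constructor
    · intro x hx
      simp only [mem_sdiff] at hx
      rcases mem_union.mp (hsub hx.1) with h1 | h1
      · exact h1
      · exact absurd h1 hx.2
    · rw [card_sdiff_of_subset hβS, hcard]
  · intro δ hδ
    rw [mem_powersetCard] at hδ
    simp only [mem_filter, mem_powersetCard]
    refine ⟨⟨union_subset_union hδ.1 (Subset.refl β), ?_⟩, subset_union_right⟩
    rw [card_union_of_disjoint (hd.mono_left hδ.1), hδ.2]
    omega
  · intro S hS
    simp only [mem_filter, mem_powersetCard] at hS
    rw [sdiff_union_self_eq_union, union_eq_left.mpr hS.2]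
  · intro δ hδ
    rw [mem_powersetCard] at hδ
    exact union_sdiff_cancel_right (hd.mono_left hδ.1)

/-- the common part `F(Λ_α) \ D_α = F(Λ_β) \ D_β` has `(h+1)²`
elements, and `F(Λ_α)`, `F(Λ_β)` each have `(h+1)² + C(h+1, 2)` elements. -/
theorem face_counts (h n : ℕ) (hh : 1 ≤ h) (hn : n = 2 * h)
    (α β : Finset V) (hdisj : α ∩ β = ∅)
    (hα : α.card = h + 1) (hβ : β.card = h + 1) :
    faceSet (joinSB α β) n \ (faceSet (joinSB α β) n \ faceSet (joinBS α β) n)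
      = faceSet (joinBS α β) n \ (faceSet (joinBS α β) n \ faceSet (joinSB α β) n) ∧
    (faceSet (joinSB α β) n \ (faceSet (joinSB α β) n \ faceSet (joinBS α β) n)).ncard
      = (h + 1) ^ 2 ∧
    (faceSet (joinSB α β) n).ncard = (h + 1) ^ 2 + (h + 1).choose 2 ∧
    (faceSet (joinBS α β) n).ncard = (h + 1) ^ 2 + (h + 1).choose 2 := by
  have hd : Disjoint α β := Finset.disjoint_iff_inter_eq_empty.mpr hdisj
  set P := (α ∪ β).powersetCard n with hP
  have hFa : faceSet (joinSB α β) n = ↑(P.filter (fun S => ¬ β ⊆ S)) :=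
    faceSB_eq α β hd n
  have hFb : faceSet (joinBS α β) n = ↑(P.filter (fun S => ¬ α ⊆ S)) := by
    rw [joinBS_eq_joinSB, faceSB_eq β α hd.symm n, union_comm β α]
  have hUcard : (α ∪ β).card = 2 * h + 2 := by
    rw [card_union_of_disjoint hd, hα, hβ]; ring
  have hPcard : P.card = (2 * h + 2).choose 2 := by
    rw [hP, card_powersetCard, hUcard, hn]
    have e := Nat.choose_symm (show 2 ≤ 2 * h + 2 by omega)
    have e2 : 2 * h + 2 - 2 = 2 * h := by omega
    rw [e2] at e
    exact e
  have hBcard : (P.filter (fun S => β ⊆ S)).card = (h + 1).choose 2 := by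
    rw [hP, card_filter_superset hd (by rw [hβ, hn]; omega), hα, hβ, hn]
    have e : 2 * h - (h + 1) = (h + 1) - 2 := by omega
    rw [e, Nat.choose_symm (by omega)]
  have hAcard : (P.filter (fun S => α ⊆ S)).card = (h + 1).choose 2 := by
    have e2 := card_filter_superset hd.symm (n := n) (by rw [hα, hn]; omega)
    rw [union_comm β α] at e2
    rw [hP, e2, hβ, hα, hn]
    have e : 2 * h - (h + 1) = (h + 1) - 2 := by omega
    rw [e, Nat.choose_symm (by omega)]
  have hnotboth : ∀ S ∈ P, α ⊆ S → ¬ β ⊆ S := by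
    intro S hS hA hB
    rw [hP, mem_powersetCard] at hS
    have := card_le_card (union_subset hA hB)
    omega
  have key1 : (P.filter (fun S => ¬ β ⊆ S)).card + (h + 1).choose 2
      = (2 * h + 2).choose 2 := by
    rw [← hBcard, ← hPcard, add_comm]
    exact Finset.card_filter_add_card_filter_not (fun S => β ⊆ S)
  have key1' : (P.filter (fun S => ¬ α ⊆ S)).card + (h + 1).choose 2
      = (2 * h + 2).choose 2 := by
    rw [← hAcard, ← hPcard, add_comm]
    exact Finset.card_filter_add_card_filter_not (fun S => α ⊆ S)
  have split2 : ((P.filter (fun S => ¬ β ⊆ S)).filter (fun S => α ⊆ S)).card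
      + ((P.filter (fun S => ¬ β ⊆ S)).filter (fun S => ¬ α ⊆ S)).card
      = (P.filter (fun S => ¬ β ⊆ S)).card :=
    Finset.card_filter_add_card_filter_not (fun S => α ⊆ S)
  have eqf : (P.filter (fun S => ¬ β ⊆ S)).filter (fun S => α ⊆ S)
      = P.filter (fun S => α ⊆ S) := by
    rw [filter_filter]
    apply filter_congr
    intro S hS
    constructor
    · tauto
    · intro hA; exact ⟨hnotboth S hS hA, hA⟩
  have hMfin : (P.filter (fun S => ¬ β ⊆ S)) ∩ (P.filter (fun S => ¬ α ⊆ S))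
      = (P.filter (fun S => ¬ β ⊆ S)).filter (fun S => ¬ α ⊆ S) := by
    rw [filter_filter, ← filter_and]
  -- arithmetic
  have h2c : 2 * (h + 1).choose 2 = (h + 1) * h := by
    rw [Nat.choose_two_right]
    have : (h + 1) - 1 = h := by omega
    rw [this]
    exact Nat.mul_div_cancel' (by rw [mul_comm]; exact (Nat.even_mul_succ_self h).two_dvd)
  have h2T : 2 * (2 * h + 2).choose 2 = (2 * h + 2) * (2 * h + 1) := by
    rw [Nat.choose_two_right]
    have : (2 * h + 2) - 1 = 2 * h + 1 := by omega
    rw [this]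
    exact Nat.mul_div_cancel' (Dvd.dvd.mul_right ⟨h + 1, by ring⟩ _)
  have hT : (2 * h + 2).choose 2 = (h + 1) ^ 2 + 2 * (h + 1).choose 2 := by
    nlinarith [h2c, h2T]
  -- common set
  have hcommon : faceSet (joinSB α β) n \ (faceSet (joinSB α β) n \ faceSet (joinBS α β) n)
      = ↑((P.filter (fun S => ¬ β ⊆ S)).filter (fun S => ¬ α ⊆ S)) := by
    rw [hFa, hFb, ← hMfin]
    ext S; simp only [Set.mem_diff, Finset.coe_inter, Set.mem_inter_iff, Finset.mem_coe]
    tauto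
  have hcommon' : faceSet (joinBS α β) n \ (faceSet (joinBS α β) n \ faceSet (joinSB α β) n)
      = ↑((P.filter (fun S => ¬ β ⊆ S)).filter (fun S => ¬ α ⊆ S)) := by
    rw [hFa, hFb, ← hMfin]
    ext S; simp only [Set.mem_diff, Finset.coe_inter, Set.mem_inter_iff, Finset.mem_coe]
    tauto
  refine ⟨by rw [hcommon, hcommon'], ?_, ?_, ?_⟩
  · rw [hcommon, Set.ncard_coe_finset]
    rw [eqf] at split2
    omega
  · rw [hFa, Set.ncard_coe_finset]; omega
  · rw [hFb, Set.ncard_coe_finset]; omega
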